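/- If (g, ∘, [,]) is a Poisson algebra (the bracket is a derivation of ∘) and g is 2-step nilpotent ([[u,v],w] = 0 for all u,v,w), then the connection ∇_u v := (1/2)[u,v] + u∘v is flat: its curvature R(u,v)w := ∇_u∇_v w - ∇_v∇_u w - ∇_{[u,v]}w vanishes identically. -/
import Mathlib


variable {V : Type*} [AddCommGroup V] [Module ℝ V]

/-- The canonical F-connection ∇_u v = (1/2)[u,v] + u∘v. -/
noncomputable def Conn (mul br : V →ₗ[ℝ] V →ₗ[ℝ] V) (u v : V) : V :=
  (2⁻¹ : ℝ) • br u v + mul u v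

/-- The curvature R(u,v)w = ∇_u∇_v w - ∇_v∇_u w - ∇_{[u,v]} w. -/
noncomputable def Curv (mul br : V →ₗ[ℝ] V →ₗ[ℝ] V) (u v w : V) : V :=
  Conn mul br u (Conn mul br v w) - Conn mul br v (Conn mul br u w)
    - Conn mul br (br u v) w

/-- A 2-step nilpotent Poisson algebra has a flat canonical connection. -/
theorem poisson_two_step_nilpotent_flat (mul br : V →ₗ[ℝ] V →ₗ[ℝ] V)
    (hcomm : ∀ u v, mul u v = mul v u)
    (hassoc : ∀ u v w, mul (mul u v) w = mul u (mul v w))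
    (hanti : ∀ u v, br u v = - br v u)
    (hjac : ∀ u v w, br u (br v w) = br (br u v) w + br v (br u w))
    (hnil : ∀ u v w, br (br u v) w = 0)
    (hleib : ∀ u v w, br u (mul v w) = mul (br u v) w + mul v (br u w)) :
    ∀ u v w, Curv mul br u v w = 0 := by
  have h1 : ∀ a b c : V, br a (br b c) = 0 := fun a b c => by
    rw [hanti]; rw [hnil]; simp
  intro u v w
  simp only [Curv, Conn, map_add, map_smul, LinearMap.add_apply, LinearMap.smul_apply,
    h1, hnil, hleib u v w, hleib v u w, hassoc, smul_zero]
  have h2 : mul u (mul v w) = mul v (mul u w) := by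
    rw [← hassoc, hcomm u v, hassoc]
  rw [hanti v u]
  simp only [map_neg, LinearMap.neg_apply, h2]
  module
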